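/- arXiv:1509.00369 — 9 statements merged into one kernel-verified Lean document; each statement's English description precedes it below -/
import Mathlib

section
/- If f is a nonzero bounded linear functional on a real normed space X with operator norm at most 1, and there exist x ∈ X and r > 0 such that ‖x + z‖ = f(x + z) for all z with ‖z‖ < r, then r ≤ ‖x‖. -/
theorem stmt_0 {X : Type*} [NormedAddCommGroup X] [NormedSpace ℝ X]
    (f : X →L[ℝ] ℝ) (hf0 : f ≠ 0) (hf1 : ‖f‖ ≤ 1)
    (x : X) (r : ℝ) (hr : 0 < r)
    (hsupp : ∀ z : X, ‖z‖ < r → f (x + z) = ‖x + z‖) :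
    r ≤ ‖x‖ := by
  by_contra h
  push_neg at h
  obtain ⟨v, hv⟩ : ∃ v, f v ≠ 0 := by
    by_contra hc
    push_neg at hc
    exact hf0 (ContinuousLinearMap.ext hc)
  have hvne : v ≠ 0 := fun h0 => hv (by simp [h0])
  have hvnorm : 0 < ‖v‖ := norm_pos_iff.mpr hvne
  set ε : ℝ := (r - ‖x‖) / (2 * ‖v‖) with hε
  have hεpos : 0 < ε := div_pos (by linarith) (by positivity)
  set w : X := ε • v with hw
  have hwne : w ≠ 0 := smul_ne_zero (ne_of_gt hεpos) hvne
  have hwnorm : ‖w‖ < r - ‖x‖ := by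
    rw [hw, norm_smul, Real.norm_of_nonneg hεpos.le, hε]
    rw [div_mul_eq_mul_div, mul_comm 2 ‖v‖, ← div_div, mul_div_assoc,
      div_self (ne_of_gt hvnorm), mul_one]
    linarith
  have key : ∀ u : X, ‖u‖ < r - ‖x‖ → f u = ‖u‖ := by
    intro u hu
    have h1 : ‖-x + u‖ < r := by
      calc ‖-x + u‖ ≤ ‖-x‖ + ‖u‖ := norm_add_le _ _
      _ = ‖x‖ + ‖u‖ := by rw [norm_neg]
      _ < r := by linarith
    have := hsupp (-x + u) h1
    rwa [add_neg_cancel_left] at this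
  have h2 : f w = ‖w‖ := key w hwnorm
  have h3 : f (-w) = ‖w‖ := by
    have := key (-w) (by rwa [norm_neg])
    rwa [norm_neg] at this
  rw [map_neg] at h3
  have : ‖w‖ = 0 := by linarith
  exact hwne (norm_eq_zero.mp this)
end

section
/- Let f, g be bounded linear functionals on a real normed space X with ‖f‖, ‖g‖ ≤ 1, f ≠ 0, g ≠ f. Suppose there exist x ∈ X and r > 0 such that f(x + z) = ‖x + z‖ whenever ‖z‖ < r, and suppose also that g attains the norm somewhere on its own ball in the sense that there exist x_g, r_g > 0 with g(x_g + z) = ‖x_g + z‖ for ‖z‖ < r_g. Then for every z with ‖z‖ < r, g(x + z) < ‖x + z‖. -/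
open Filter Topology

/-- `f - g` has a local minimum at `p`, so its derivative, which is `f - g` itself, vanishes. -/
theorem ContinuousLinearMap.eq_of_eventually_le_of_eq {E : Type*} [NormedAddCommGroup E]
    [NormedSpace ℝ E] {f g : E →L[ℝ] ℝ} {p : E} (hle : ∀ᶠ y in 𝓝 p, g y ≤ f y)
    (heq : g p = f p) : g = f := by
  have hmin : IsLocalMin (f - g) p :=
    hle.mono fun y hy => by simp only [sub_apply]; linarith
  exact (sub_eq_zero.mp (hmin.hasFDerivAt_eq_zero (f - g).hasFDerivAt)).symm

theorem ContinuousLinearMap.apply_le_norm_of_opNorm_le_one {E : Type*} [SeminormedAddCommGroup E]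
    [NormedSpace ℝ E] {g : E →L[ℝ] ℝ} (hg : ‖g‖ ≤ 1) (y : E) : g y ≤ ‖y‖ :=
  (le_abs_self _).trans (by simpa using g.le_of_opNorm_le hg y)

theorem stmt_1_general {X : Type*} [NormedAddCommGroup X] [NormedSpace ℝ X]
    (f g : X →L[ℝ] ℝ) (hg1 : ‖g‖ ≤ 1) (hgf : g ≠ f)
    (x : X) (r : ℝ)
    (hsupp : ∀ z : X, ‖z‖ < r → f (x + z) = ‖x + z‖) :
    ∀ z : X, ‖z‖ < r → g (x + z) < ‖x + z‖ := by
  have hg_le : ∀ y, g y ≤ ‖y‖ := g.apply_le_norm_of_opNorm_le_one hg1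
  have hf_eq : ∀ y ∈ Metric.ball x r, f y = ‖y‖ := fun y hy => by
    simpa using hsupp (y - x) (by rwa [← dist_eq_norm])
  intro z hz
  have hxz : x + z ∈ Metric.ball x r := by simpa using hz
  refine (hg_le _).lt_of_ne fun heq =>
    hgf (ContinuousLinearMap.eq_of_eventually_le_of_eq (p := x + z) ?_ ?_)
  · filter_upwards [Metric.isOpen_ball.mem_nhds hxz] with y hy
    exact (hg_le y).trans_eq (hf_eq y hy).symm
  · rw [heq, hf_eq _ hxz]

theorem stmt_1 {X : Type*} [NormedAddCommGroup X] [NormedSpace ℝ X]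
    (f g : X →L[ℝ] ℝ) (hf0 : f ≠ 0) (hf1 : ‖f‖ ≤ 1) (hg1 : ‖g‖ ≤ 1) (hgf : g ≠ f)
    (x : X) (r : ℝ) (hr : 0 < r)
    (hsupp : ∀ z : X, ‖z‖ < r → f (x + z) = ‖x + z‖)
    (xg : X) (rg : ℝ) (hrg : 0 < rg)
    (hsuppg : ∀ z : X, ‖z‖ < rg → g (xg + z) = ‖xg + z‖) :
    ∀ z : X, ‖z‖ < r → g (x + z) < ‖x + z‖ :=
  stmt_1_general f g hg1 hgf x r hsupp
end

section
/- If f and g are two distinct functionals in the dual ball of a real normed space X, f locally supports the norm at x_f with radius r_f > 0, and g locally supports the norm at x_g with radius r_g > 0 (i.e. f(x_f+z)=‖x_f+z‖ for ‖z‖<r_f and similarly for g), then ‖x_g − x_f‖ ≥ r_f. -/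
theorem stmt_2 {X : Type*} [NormedAddCommGroup X] [NormedSpace ℝ X]
    (f g : X →L[ℝ] ℝ) (hf1 : ‖f‖ ≤ 1) (hg1 : ‖g‖ ≤ 1) (hfg : f ≠ g)
    (xf xg : X) (rf rg : ℝ) (hrf : 0 < rf) (hrg : 0 < rg)
    (hsuppf : ∀ z : X, ‖z‖ < rf → f (xf + z) = ‖xf + z‖)
    (hsuppg : ∀ z : X, ‖z‖ < rg → g (xg + z) = ‖xg + z‖) :
    rf ≤ ‖xg - xf‖ := by
  by_contra h
  push_neg at h
  set ε : ℝ := min rg (rf - ‖xg - xf‖) with hε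
  have hεpos : 0 < ε := lt_min hrg (by linarith)
  -- both f and g agree with the norm near xg
  have key : ∀ z : X, ‖z‖ < ε → f (xg + z) = g (xg + z) := by
    intro z hz
    have hzrg : ‖z‖ < rg := lt_of_lt_of_le hz (min_le_left _ _)
    have h1 : g (xg + z) = ‖xg + z‖ := hsuppg z hzrg
    have hw : ‖xg - xf + z‖ < rf := by
      calc ‖xg - xf + z‖ ≤ ‖xg - xf‖ + ‖z‖ := norm_add_le _ _
        _ < rf := by
          have := lt_of_lt_of_le hz (min_le_right rg (rf - ‖xg - xf‖))
          linarith
    have h2 : f (xf + (xg - xf + z)) = ‖xf + (xg - xf + z)‖ := hsuppf _ hw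
    rw [show xf + (xg - xf + z) = xg + z by abel] at h2
    rw [h1, h2]
  have hx0 : f xg = g xg := by
    have := key 0 (by simpa using hεpos)
    simpa using this
  have hzero : ∀ z : X, ‖z‖ < ε → f z = g z := by
    intro z hz
    have := key z hz
    simp only [map_add, hx0] at this
    linarith
  apply hfg
  ext v
  rcases eq_or_ne v 0 with rfl | hv
  · simp
  · have hnv : 0 < ‖v‖ := norm_pos_iff.mpr hv
    set t : ℝ := ε / (2 * ‖v‖) with ht
    have htpos : 0 < t := div_pos hεpos (by positivity)
    have hnorm : ‖t • v‖ < ε := by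
      rw [norm_smul, Real.norm_eq_abs, abs_of_pos htpos, ht]
      rw [div_mul_eq_mul_div, mul_comm]
      rw [div_lt_iff₀ (by positivity)]
      nlinarith
    have := hzero (t • v) hnorm
    simp only [map_smul, smul_eq_mul] at this
    have := mul_left_cancel₀ (ne_of_gt htpos) this
    exact this
end

section
/- Let X be a Banach space, and suppose (e_γ, e*_γ)_{γ∈Γ} is a biorthogonal system with ‖e_γ‖=1, ‖e*_γ‖ ≤ L, and that the closed linear span of (e_γ) is X. If every f ∈ X* satisfies ∑_γ |f(e_γ)| ≤ M‖f‖ for some fixed constant M, then the map x ↦ (e*_γ(x))_{γ∈Γ} is an isomorphism of X onto a subspace of c₀(Γ). -/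
open scoped Classical ZeroAtInfty

theorem stmt_6 {X : Type*} [NormedAddCommGroup X] [NormedSpace ℝ X] [CompleteSpace X]
    {Γ : Type*} [TopologicalSpace Γ] [DiscreteTopology Γ]
    (e : Γ → X) (es : Γ → X →L[ℝ] ℝ)
    (hbi : ∀ α β : Γ, es α (e β) = if α = β then 1 else 0)
    (hnorm : ∀ γ, ‖e γ‖ = 1) (L : ℝ) (hdual : ∀ γ, ‖es γ‖ ≤ L)
    (hdense : Dense (Submodule.span ℝ (Set.range e) : Set X))
    (M : ℝ) (hM : 0 ≤ M)
    (hsum : ∀ f : X →L[ℝ] ℝ, Summable (fun γ => |f (e γ)|) ∧ ∑' γ, |f (e γ)| ≤ M * ‖f‖) :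
    ∃ T : X →L[ℝ] C₀(Γ, ℝ), (∀ x γ, T x γ = es γ x) ∧
      ∃ c > 0, ∀ x : X, c * ‖x‖ ≤ ‖T x‖ := by
  classical
  set C : ℝ := max L 0 + 1 with hC
  have hCpos : (0:ℝ) < C := by
    have : (0:ℝ) ≤ max L 0 := le_max_right _ _
    linarith
  have hLC : L ≤ C := (le_max_left L 0).trans (by linarith [hCpos])
  have hbound : ∀ (x : X) (γ : Γ), |es γ x| ≤ C * ‖x‖ := by
    intro x γ
    calc |es γ x| ≤ ‖es γ‖ * ‖x‖ := (es γ).le_opNorm x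
      _ ≤ C * ‖x‖ := mul_le_mul_of_nonneg_right ((hdual γ).trans hLC) (norm_nonneg x)
  -- coefficient lemma
  have hcoef : ∀ (c : Γ →₀ ℝ) (γ : Γ), es γ (c.sum fun i a => a • e i) = c γ := by
    intro c γ
    rw [Finsupp.sum, map_sum]
    have : ∀ i ∈ c.support, es γ (c i • e i) = if γ = i then c i else 0 := by
      intro i _
      rw [map_smul, hbi γ i]
      by_cases h : γ = i <;> simp [h]
    rw [Finset.sum_congr rfl this, Finset.sum_ite_eq c.support γ]
    by_cases h : γ ∈ c.support
    · simp [h]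
    · simp [h, Finsupp.notMem_support_iff.mp h]
  -- tendsto lemma
  have htend : ∀ x : X, Filter.Tendsto (fun γ => es γ x) Filter.cofinite (nhds 0) := by
    intro x
    rw [NormedAddCommGroup.tendsto_nhds_zero]
    intro ε hε
    obtain ⟨y, hyS, hxy⟩ := Metric.mem_closure_iff.mp (hdense x) (ε / C) (by positivity)
    rw [dist_eq_norm] at hxy
    obtain ⟨c, hc⟩ := Finsupp.mem_span_range_iff_exists_finsupp.mp hyS
    rw [Filter.eventually_cofinite]
    apply Set.Finite.subset c.support.finite_toSet
    intro γ hγ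
    simp only [Set.mem_setOf_eq, not_lt] at hγ
    by_contra hns
    have hcγ : c γ = 0 := Finsupp.notMem_support_iff.mp hns
    have hesy : es γ y = 0 := by rw [← hc, hcoef]; exact hcγ
    have : es γ x = es γ (x - y) := by rw [map_sub, hesy, sub_zero]
    have h1 : ‖es γ x‖ ≤ C * ‖x - y‖ := by rw [this]; exact hbound (x - y) γ
    have h2 : C * ‖x - y‖ < C * (ε / C) := by
      exact mul_lt_mul_of_pos_left hxy hCpos
    rw [mul_div_cancel₀ _ (ne_of_gt hCpos)] at h2
    have := lt_of_le_of_lt h1 h2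
    linarith [hγ]
  -- the map into C₀
  let F : X → C₀(Γ, ℝ) := fun x =>
    { toFun := fun γ => es γ x
      continuous_toFun := continuous_of_discreteTopology
      zero_at_infty' := by rw [Filter.cocompact_eq_cofinite]; exact htend x }
  have hFapp : ∀ x γ, F x γ = es γ x := fun x γ => rfl
  have hFnorm : ∀ x, ‖F x‖ ≤ C * ‖x‖ := by
    intro x
    rw [← ZeroAtInftyContinuousMap.norm_toBCF_eq_norm]
    apply (BoundedContinuousFunction.norm_le (by positivity)).mpr
    intro γ
    exact hbound x γ
  let T : X →L[ℝ] C₀(Γ, ℝ) :=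
    LinearMap.mkContinuous
      { toFun := F
        map_add' := fun x y => by ext γ; simp [hFapp]
        map_smul' := fun a x => by ext γ; simp [hFapp] }
      C hFnorm
  have hTapp : ∀ x γ, T x γ = es γ x := fun x γ => rfl
  have hTrev : ∀ (x : X) (γ : Γ), |es γ x| ≤ ‖T x‖ := by
    intro x γ
    rw [← ZeroAtInftyContinuousMap.norm_toBCF_eq_norm]
    exact (T x).toBCF.norm_coe_le_norm γ
  -- lower bound on span
  have hle : ∀ x ∈ (Submodule.span ℝ (Set.range e) : Set X), ‖x‖ ≤ M * ‖T x‖ := by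
    intro x hx
    apply NormedSpace.norm_le_dual_bound ℝ x (by positivity)
    intro f
    obtain ⟨c, hc⟩ := Finsupp.mem_span_range_iff_exists_finsupp.mp hx
    have hfx : f x = ∑ i ∈ c.support, c i * f (e i) := by
      rw [← hc, Finsupp.sum, map_sum]
      exact Finset.sum_congr rfl fun i _ => by rw [map_smul]; rfl
    have hci : ∀ i : Γ, |c i| ≤ ‖T x‖ := by
      intro i
      have : c i = es i x := by rw [← hc, hcoef]
      rw [this]; exact hTrev x i
    have h1 : ‖f x‖ ≤ ∑ i ∈ c.support, |c i| * |f (e i)| := by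
      rw [hfx]
      calc ‖∑ i ∈ c.support, c i * f (e i)‖ ≤ ∑ i ∈ c.support, ‖c i * f (e i)‖ :=
            norm_sum_le _ _
        _ = ∑ i ∈ c.support, |c i| * |f (e i)| := by
            exact Finset.sum_congr rfl fun i _ => abs_mul _ _
    have h2 : ∑ i ∈ c.support, |c i| * |f (e i)| ≤ ‖T x‖ * ∑ i ∈ c.support, |f (e i)| := by
      rw [Finset.mul_sum]
      exact Finset.sum_le_sum fun i _ =>
        mul_le_mul_of_nonneg_right (hci i) (abs_nonneg _)
    have h3 : ∑ i ∈ c.support, |f (e i)| ≤ ∑' γ, |f (e γ)| :=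
      Summable.sum_le_tsum c.support (fun i _ => abs_nonneg _) (hsum f).1
    have h4 := (hsum f).2
    have hTx : (0:ℝ) ≤ ‖T x‖ := norm_nonneg _
    calc ‖f x‖ ≤ ‖T x‖ * ∑ i ∈ c.support, |f (e i)| := h1.trans h2
      _ ≤ ‖T x‖ * (M * ‖f‖) := by
          apply mul_le_mul_of_nonneg_left (h3.trans h4) hTx
      _ = M * ‖T x‖ * ‖f‖ := by ring
  -- extend to all of X by density
  have hclosed : IsClosed {x : X | ‖x‖ ≤ M * ‖T x‖} :=
    isClosed_le continuous_norm (continuous_const.mul T.continuous.norm)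
  have hall : ∀ x : X, ‖x‖ ≤ M * ‖T x‖ := by
    intro x
    have hsub : (Submodule.span ℝ (Set.range e) : Set X) ⊆ {x : X | ‖x‖ ≤ M * ‖T x‖} := hle
    have : (Set.univ : Set X) ⊆ {x : X | ‖x‖ ≤ M * ‖T x‖} := by
      rw [← hdense.closure_eq]
      exact hclosed.closure_subset_iff.mpr hsub
    exact this (Set.mem_univ x)
  refine ⟨T, hTapp, (M + 1)⁻¹, by positivity, fun x => ?_⟩
  rw [inv_mul_le_iff₀ (by linarith : (0:ℝ) < M + 1)]
  have := hall x
  have := norm_nonneg (T x)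
  nlinarith
end

section
/- With notation as in the inductive construction (p(f,n), G(f,n), w(f,n) = ∑_{γ∈G(f,n)} sgn(f(e_γ)) e*_γ, h(f,m) = ∑_{i=1}^m (p(f,i) − p(f,i+1)) w(f,i)): for every γ ∈ Γ and every m, |h(f,m)(e_γ)| ≤ |f(e_γ)| and h(f,m)(e_γ) → f(e_γ) as m → ∞; consequently ∑_γ |f(e_γ) − h(f,m)(e_γ)| → 0 by dominated convergence. -/
open scoped Classical

theorem stmt_10 {X : Type*} [NormedAddCommGroup X] [NormedSpace ℝ X] [CompleteSpace X]
    {Γ : Type*} (e : Γ → X) (es : Γ → X →L[ℝ] ℝ)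
    (hbi : ∀ α β : Γ, es α (e β) = if α = β then 1 else 0)
    (hnorm : ∀ γ, ‖e γ‖ = 1) (L : ℝ) (hdual : ∀ γ, ‖es γ‖ ≤ L)
    (f : X →L[ℝ] ℝ) (hsum : Summable fun γ => |f (e γ)|)
    (hinf : {γ | f (e γ) ≠ 0}.Infinite)
    (p : ℕ → ℝ) (G : ℕ → Finset Γ)
    (hp1 : IsGreatest (Set.range fun γ => |f (e γ)|) (p 1))
    (hG : ∀ n, 1 ≤ n → (G n : Set Γ) = {γ | p n ≤ |f (e γ)|})
    (hpsucc : ∀ n, 1 ≤ n →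
      IsGreatest ((fun γ => |f (e γ)|) '' (↑(G n) : Set Γ)ᶜ) (p (n + 1)))
    (w : ℕ → X →L[ℝ] ℝ)
    (hw : ∀ n, w n = ∑ γ ∈ G n, Real.sign (f (e γ)) • es γ)
    (h : ℕ → X →L[ℝ] ℝ)
    (hh : ∀ m, h m = ∑ i ∈ Finset.Icc 1 m, (p i - p (i + 1)) • w i) :
    (∀ γ : Γ, ∀ m : ℕ, |(h m) (e γ)| ≤ |f (e γ)|) ∧
    (∀ γ : Γ, Filter.Tendsto (fun m => (h m) (e γ)) Filter.atTop (nhds (f (e γ)))) ∧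
    Filter.Tendsto (fun m => ∑' γ, |f (e γ) - (h m) (e γ)|) Filter.atTop (nhds 0) := by
  -- membership in the level sets
  have gmem : ∀ n γ, 1 ≤ n → (γ ∈ G n ↔ p n ≤ |f (e γ)|) := by
    intro n γ hn
    have h1 := hG n hn
    rw [Set.ext_iff] at h1
    simpa using h1 γ
  -- positivity of p
  have ppos : ∀ n, 1 ≤ n → 0 < p n := by
    intro n hn
    rcases Nat.exists_eq_add_of_le hn with ⟨k, rfl⟩
    cases k with
    | zero =>
      obtain ⟨γ, hγ⟩ := hinf.nonempty
      exact lt_of_lt_of_le (abs_pos.mpr hγ) (hp1.2 ⟨γ, rfl⟩)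
    | succ k =>
      obtain ⟨γ, hγ1, hγ2⟩ := (hinf.diff (G (1 + k)).finite_toSet).nonempty
      have hle : |f (e γ)| ≤ p ((1 + k) + 1) :=
        (hpsucc (1 + k) (by omega)).2 ⟨γ, hγ2, rfl⟩
      have : (1 + (k + 1)) = (1 + k) + 1 := by omega
      rw [this]
      exact lt_of_lt_of_le (abs_pos.mpr hγ1) hle
  -- strict decrease of p
  have pdec : ∀ n, 1 ≤ n → p (n + 1) < p n := by
    intro n hn
    obtain ⟨γ, hγc, hγe⟩ := (hpsucc n hn).1
    have : ¬ p n ≤ |f (e γ)| := by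
      intro hc
      exact hγc ((gmem n γ hn).mpr hc)
    rw [← hγe]
    linarith [not_le.mp this]
  -- antitonicity of p
  have panti : ∀ a b, 1 ≤ a → a ≤ b → p b ≤ p a := by
    intro a b ha hab
    induction b with
    | zero => omega
    | succ b ih =>
      rcases eq_or_lt_of_le hab with hc | hc
      · rw [hc]
      · have hb : a ≤ b := by omega
        have h1b : 1 ≤ b := le_trans ha hb
        exact le_trans (pdec b h1b).le (ih hb)
  -- monotonicity of G
  have gmono : ∀ a b, 1 ≤ a → a ≤ b → G a ⊆ G b := by
    intro a b ha hab γ hγ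
    exact (gmem b γ (le_trans ha hab)).mpr
      (le_trans (panti a b ha hab) ((gmem a γ ha).mp hγ))
  -- cardinality growth of G
  have gcard : ∀ n, 1 ≤ n → n ≤ (G n).card := by
    intro n hn
    induction n with
    | zero => omega
    | succ n ih =>
      cases Nat.eq_or_lt_of_le hn with
      | inl hc =>
        have hn0 : n = 0 := by omega
        subst hn0
        obtain ⟨γ, hγ⟩ := hp1.1
        have : γ ∈ G 1 := (gmem 1 γ le_rfl).mpr (le_of_eq hγ.symm)
        simpa using Finset.card_pos.mpr ⟨γ, this⟩
      | inr hc =>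
        have h1n : 1 ≤ n := by omega
        obtain ⟨γ, hγc, hγe⟩ := (hpsucc n h1n).1
        have hγn : γ ∉ G n := hγc
        have hγn1 : γ ∈ G (n + 1) := (gmem (n + 1) γ (by omega)).mpr (le_of_eq hγe.symm)
        have hsub : insert γ (G n) ⊆ G (n + 1) := by
          intro x hx
          rcases Finset.mem_insert.mp hx with rfl | hx
          · exact hγn1
          · exact gmono n (n + 1) h1n (by omega) hx
        have := Finset.card_le_card hsub
        rw [Finset.card_insert_of_notMem hγn] at this
        have := ih h1n
        omega
  -- p becomes small
  have psmall : ∀ ε : ℝ, 0 < ε → ∃ n, 1 ≤ n ∧ p n < ε := by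
    intro ε hε
    by_contra hcon
    push_neg at hcon
    have hfin : {γ | ε ≤ |f (e γ)|}.Finite := by
      have h2 := (hsum.tendsto_cofinite_zero.eventually (Metric.ball_mem_nhds 0 hε))
      rw [Filter.eventually_cofinite] at h2
      refine h2.subset ?_
      intro x hx hc
      simp [Real.dist_eq] at hc
      simp only [Set.mem_setOf_eq] at hx
      linarith
    have hsub : ∀ n, 1 ≤ n → G n ⊆ hfin.toFinset := by
      intro n hn γ hγ
      rw [Set.Finite.mem_toFinset]
      exact le_trans (hcon n hn) ((gmem n γ hn).mp hγ)
    have h1 := gcard (hfin.toFinset.card + 1) (by omega)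
    have h2 := Finset.card_le_card (hsub (hfin.toFinset.card + 1) (by omega))
    omega
  -- p tends to 0
  have pto0 : Filter.Tendsto p Filter.atTop (nhds 0) := by
    rw [Metric.tendsto_atTop]
    intro ε hε
    obtain ⟨n, hn1, hnε⟩ := psmall ε hε
    refine ⟨n, fun m hm => ?_⟩
    rw [Real.dist_eq, sub_zero, abs_of_pos (ppos m (le_trans hn1 hm))]
    exact lt_of_le_of_lt (panti n m hn1 hm) hnε
  -- value of w on basis vectors
  have wval : ∀ i γ, w i (e γ) = if γ ∈ G i then Real.sign (f (e γ)) else 0 := by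
    intro i γ
    rw [hw, ContinuousLinearMap.sum_apply]
    simp only [ContinuousLinearMap.smul_apply, hbi, smul_eq_mul, mul_ite, mul_one, mul_zero]
    rw [Finset.sum_ite_eq' (G i) γ (fun β => Real.sign (f (e β)))]
  -- value of h on basis vectors
  have happ : ∀ m γ, h m (e γ)
      = ∑ i ∈ Finset.Icc 1 m, (p i - p (i + 1)) * (if γ ∈ G i then Real.sign (f (e γ)) else 0) := by
    intro m γ
    rw [hh, ContinuousLinearMap.sum_apply]
    simp only [ContinuousLinearMap.smul_apply, smul_eq_mul, wval]
  -- h vanishes outside the support of f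
  have hval0 : ∀ γ, f (e γ) = 0 → ∀ m, h m (e γ) = 0 := by
    intro γ hγ m
    rw [happ m γ]
    simp [hγ, Real.sign_zero]
  -- sign times abs
  have signabs : ∀ x : ℝ, Real.sign x * |x| = x := by
    intro x
    rcases lt_trichotomy x 0 with hx | hx | hx
    · rw [Real.sign_of_neg hx, abs_of_neg hx]; ring
    · simp [hx]
    · rw [Real.sign_of_pos hx, abs_of_pos hx]; ring
  have abssign : ∀ x : ℝ, x ≠ 0 → |Real.sign x| = 1 := by
    intro x hx
    rcases lt_trichotomy x 0 with h1 | h1 | h1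
    · simp [Real.sign_of_neg h1]
    · exact absurd h1 hx
    · simp [Real.sign_of_pos h1]
  -- key formula for h on support elements
  have key : ∀ γ, f (e γ) ≠ 0 → ∃ N, 1 ≤ N ∧ p N = |f (e γ)| ∧
      ∀ m, h m (e γ) = if N ≤ m then Real.sign (f (e γ)) * (|f (e γ)| - p (m + 1)) else 0 := by
    intro γ hγ
    have hex : ∃ n, 1 ≤ n ∧ p n ≤ |f (e γ)| := by
      obtain ⟨n, hn1, hn⟩ := psmall |f (e γ)| (abs_pos.mpr hγ)
      exact ⟨n, hn1, hn.le⟩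
    obtain ⟨hN1, hNle⟩ := Nat.find_spec hex
    set N := Nat.find hex with hNdef
    have pNeq : p N = |f (e γ)| := by
      refine le_antisymm hNle ?_
      rcases Nat.eq_or_lt_of_le hN1 with hc | hc
      · rw [← hc]
        exact hp1.2 ⟨γ, rfl⟩
      · obtain ⟨k, hk⟩ : ∃ k, N = k + 1 := ⟨N - 1, by omega⟩
        have h1k : 1 ≤ k := by omega
        have hkmin := Nat.find_min hex (m := k) (by rw [← hNdef]; omega)
        push_neg at hkmin
        have hklt : |f (e γ)| < p k := hkmin h1k
        have hγk : γ ∈ (↑(G k) : Set Γ)ᶜ := by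
          intro hc2
          exact absurd ((gmem k γ h1k).mp hc2) (not_le.mpr hklt)
        rw [hk]
        exact (hpsucc k h1k).2 ⟨γ, hγk, rfl⟩
    have memG : ∀ i, 1 ≤ i → (γ ∈ G i ↔ N ≤ i) := by
      intro i hi
      constructor
      · intro hmem
        exact Nat.find_le ⟨hi, (gmem i γ hi).mp hmem⟩
      · intro hNi
        exact (gmem i γ hi).mpr (le_trans (panti N i hN1 hNi) pNeq.le)
    refine ⟨N, hN1, pNeq, ?_⟩
    intro m
    induction m with
    | zero =>
      rw [happ 0 γ]
      have : ¬ N ≤ 0 := by omega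
      simp [this]
    | succ m ih =>
      rw [happ (m + 1) γ, Finset.sum_Icc_succ_top (by omega : 1 ≤ m + 1), ← happ m γ, ih]
      by_cases hc : N ≤ m + 1
      · have hmem : γ ∈ G (m + 1) := (memG (m + 1) (by omega)).mpr hc
        rw [if_pos hmem, if_pos hc]
        by_cases hc2 : N ≤ m
        · rw [if_pos hc2]; ring
        · have hNm : N = m + 1 := by omega
          rw [if_neg hc2, zero_add, ← pNeq, hNm]
          ring
      · have hmem : γ ∉ G (m + 1) := fun hc2 => hc ((memG (m + 1) (by omega)).mp hc2)
        have hc2 : ¬ N ≤ m := by omega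
        rw [if_neg hmem, if_neg hc, if_neg hc2]
        ring
  -- Part 1
  have partA : ∀ γ : Γ, ∀ m : ℕ, |(h m) (e γ)| ≤ |f (e γ)| := by
    intro γ m
    by_cases hγ : f (e γ) = 0
    · rw [hval0 γ hγ m]; simp
    · obtain ⟨N, hN1, hNeq, hkey⟩ := key γ hγ
      rw [hkey m]
      split_ifs with hc
      · have hle : p (m + 1) ≤ |f (e γ)| := le_trans (panti N (m + 1) hN1 (by omega)) hNeq.le
        have hpos : 0 < p (m + 1) := ppos (m + 1) (by omega)
        rw [abs_mul, abssign _ hγ, one_mul, abs_of_nonneg (by linarith)]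
        linarith
      · simp
  -- Part 2
  have partB : ∀ γ : Γ,
      Filter.Tendsto (fun m => (h m) (e γ)) Filter.atTop (nhds (f (e γ))) := by
    intro γ
    by_cases hγ : f (e γ) = 0
    · simp only [hval0 γ hγ, hγ]
      exact tendsto_const_nhds
    · obtain ⟨N, hN1, hNeq, hkey⟩ := key γ hγ
      have hp' : Filter.Tendsto (fun m : ℕ => p (m + 1)) Filter.atTop (nhds 0) :=
        pto0.comp (Filter.tendsto_add_atTop_nat 1)
      have hlim : Filter.Tendsto
          (fun m => f (e γ) - Real.sign (f (e γ)) * p (m + 1)) Filter.atTop (nhds (f (e γ))) := by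
        have h2 := Filter.Tendsto.const_mul (Real.sign (f (e γ))) hp'
        have h3 := Filter.Tendsto.sub (tendsto_const_nhds (x := f (e γ))
          (f := Filter.atTop (α := ℕ))) h2
        simpa using h3
      refine hlim.congr' ?_
      filter_upwards [Filter.eventually_ge_atTop N] with m hm
      rw [hkey m, if_pos hm, mul_sub, signabs]
  refine ⟨partA, partB, ?_⟩
  -- Part 3 by dominated convergence
  have hptwise : ∀ γ, Filter.Tendsto (fun m => |f (e γ) - h m (e γ)|) Filter.atTop (nhds 0) := by
    intro γ
    have := (Filter.Tendsto.sub (tendsto_const_nhds (x := f (e γ))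
      (f := Filter.atTop (α := ℕ))) (partB γ)).abs
    simpa using this
  have hbound : ∀ᶠ m in Filter.atTop, ∀ γ, ‖|f (e γ) - h m (e γ)|‖ ≤ 2 * |f (e γ)| := by
    refine Filter.Eventually.of_forall fun m γ => ?_
    rw [Real.norm_eq_abs, abs_abs]
    calc |f (e γ) - h m (e γ)| ≤ |f (e γ)| + |h m (e γ)| := abs_sub _ _
      _ ≤ 2 * |f (e γ)| := by linarith [partA γ m]
  have := tendsto_tsum_of_dominated_convergence
    (f := fun m γ => |f (e γ) - h m (e γ)|) (g := fun _ => 0)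
    (bound := fun γ => 2 * |f (e γ)|) (hsum.mul_left 2) hptwise hbound
  simpa [tsum_zero] using this
end

section
/- With the same notation, if f has infinite support then ‖f‖₁ = ∑_{i=1}^∞ (p(f,i) − p(f,i+1))·|G(f,i)|. -/
/-!
Write `g γ = |f (e γ)|`. Each level `p n` is a value of `g`, and
`p` is strictly decreasing, so the levels are values of `g` at distinct points; summability of `g`
forces `p n → 0`. Since no value of `g` lies strictly between `p (n + 1)` and `p n`, the `n`-th
partial sum of the series telescopes to `∑ γ ∈ G n, (g γ - p (n + 1)) = ∑' γ, max (g γ - p (n + 1)) 0`,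
which tends to `∑' γ, g γ` by dominated convergence.
-/

open scoped Classical
open Filter Finset Topology

/-- The greedy level sets of `g`, indexed from `0`: `p n`, `G n` are the paper's `p(f, n + 1)`,
`G(f, n + 1)` for `g γ = |f (e γ)|`. -/
structure IsGreedyLevels {Γ : Type*} (g : Γ → ℝ) (p : ℕ → ℝ) (G : ℕ → Finset Γ) : Prop where
  isGreatest_zero : IsGreatest (Set.range g) (p 0)
  coe_eq : ∀ n, (G n : Set Γ) = {γ | p n ≤ g γ}
  isGreatest_succ : ∀ n, IsGreatest (g '' (G n : Set Γ)ᶜ) (p (n + 1))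

namespace IsGreedyLevels

variable {Γ : Type*} {g : Γ → ℝ} {p : ℕ → ℝ} {G : ℕ → Finset Γ}

theorem mem_iff (h : IsGreedyLevels g p G) {n : ℕ} {γ : Γ} : γ ∈ G n ↔ p n ≤ g γ := by
  rw [← Finset.mem_coe, h.coe_eq n, Set.mem_ofPred_eq]

theorem le_zero (h : IsGreedyLevels g p G) (γ : Γ) : g γ ≤ p 0 :=
  h.isGreatest_zero.2 ⟨γ, rfl⟩

theorem le_succ_of_notMem (h : IsGreedyLevels g p G) {n : ℕ} {γ : Γ} (hγ : γ ∉ G n) :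
    g γ ≤ p (n + 1) :=
  (h.isGreatest_succ n).2 ⟨γ, hγ, rfl⟩

theorem exists_eq (h : IsGreedyLevels g p G) : ∀ n, ∃ γ, g γ = p n
  | 0 => h.isGreatest_zero.1
  | n + 1 => let ⟨γ, _, hγ⟩ := (h.isGreatest_succ n).1; ⟨γ, hγ⟩

theorem strictAnti (h : IsGreedyLevels g p G) : StrictAnti p := by
  refine strictAnti_nat_of_succ_lt fun n => ?_
  obtain ⟨γ, hγ, hγp⟩ := (h.isGreatest_succ n).1
  exact hγp ▸ not_le.mp (mt h.mem_iff.mpr hγ)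

theorem subset_succ (h : IsGreedyLevels g p G) (n : ℕ) : G n ⊆ G (n + 1) := fun _ hγ =>
  h.mem_iff.mpr ((h.strictAnti n.lt_succ_self).le.trans (h.mem_iff.mp hγ))

theorem eq_of_mem_sdiff (h : IsGreedyLevels g p G) {n : ℕ} {γ : Γ}
    (hγ : γ ∈ G (n + 1) \ G n) : g γ = p (n + 1) :=
  le_antisymm (h.le_succ_of_notMem (Finset.mem_sdiff.mp hγ).2)
    (h.mem_iff.mp (Finset.mem_sdiff.mp hγ).1)

theorem tendsto_atTop_zero (h : IsGreedyLevels g p G) (hg : Tendsto g cofinite (𝓝 0)) :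
    Tendsto p atTop (𝓝 0) := by
  choose γ hγ using h.exists_eq
  have hγ_inj : Function.Injective γ := fun m n hmn =>
    h.strictAnti.injective (by rw [← hγ m, ← hγ n, hmn])
  have := hg.comp hγ_inj.tendsto_cofinite
  rwa [Nat.cofinite_eq_atTop, Function.comp_def, funext hγ] at this

theorem nonneg (h : IsGreedyLevels g p G) (hg : Tendsto g cofinite (𝓝 0)) (n : ℕ) : 0 ≤ p n :=
  h.strictAnti.antitone.le_of_tendsto (h.tendsto_atTop_zero hg) n

theorem sum_range_succ_eq (h : IsGreedyLevels g p G) (n : ℕ) :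
    ∑ i ∈ range (n + 1), (p i - p (i + 1)) * #(G i) = ∑ γ ∈ G n, (g γ - p (n + 1)) := by
  induction n with
  | zero =>
    have hG : ∀ γ ∈ G 0, g γ - p 1 = p 0 - p 1 := fun γ hγ => by
      rw [le_antisymm (h.le_zero γ) (h.mem_iff.mp hγ)]
    rw [sum_range_one, sum_congr rfl hG, sum_const, nsmul_eq_mul, mul_comm]
  | succ n ih =>
    have hsub := h.subset_succ n
    have hnew : ∀ γ ∈ G (n + 1) \ G n, g γ - p (n + 2) = p (n + 1) - p (n + 2) :=
      fun γ hγ => by rw [h.eq_of_mem_sdiff hγ]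
    have hcard : (#(G (n + 1) \ G n) : ℝ) = #(G (n + 1)) - #(G n) := by
      rw [card_sdiff_of_subset hsub, Nat.cast_sub (card_le_card hsub)]
    rw [sum_range_succ, ih, ← sum_sdiff hsub, sum_congr rfl hnew, sum_const, nsmul_eq_mul,
      hcard]
    simp only [sum_sub_distrib, sum_const, nsmul_eq_mul]
    ring

theorem sum_sub_eq_tsum_max (h : IsGreedyLevels g p G) (n : ℕ) :
    ∑ γ ∈ G n, (g γ - p (n + 1)) = ∑' γ, max (g γ - p (n + 1)) 0 := by
  rw [tsum_eq_sum (s := G n) fun γ hγ => max_eq_right (sub_nonpos.mpr (h.le_succ_of_notMem hγ))]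
  refine sum_congr rfl fun γ hγ => (max_eq_left ?_).symm
  exact sub_nonneg.mpr ((h.strictAnti n.lt_succ_self).le.trans (h.mem_iff.mp hγ))

theorem tendsto_sum_sub (h : IsGreedyLevels g p G) (hg0 : ∀ γ, 0 ≤ g γ) (hg : Summable g) :
    Tendsto (fun n => ∑ γ ∈ G n, (g γ - p (n + 1))) atTop (𝓝 (∑' γ, g γ)) := by
  have hp := (h.tendsto_atTop_zero hg.tendsto_cofinite_zero).comp (tendsto_add_atTop_nat 1)
  simp_rw [h.sum_sub_eq_tsum_max]
  refine tendsto_tsum_of_dominated_convergence hg (fun γ => ?_) (Eventually.of_forall fun n γ => ?_)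
  · have := ((tendsto_const_nhds (x := g γ)).sub hp).max (tendsto_const_nhds (x := (0 : ℝ)))
    rwa [sub_zero, max_eq_left (hg0 γ)] at this
  · have hpn := h.nonneg hg.tendsto_cofinite_zero (n + 1)
    rw [Real.norm_of_nonneg (le_max_right _ _)]
    exact max_le (by linarith) (hg0 γ)

theorem hasSum (h : IsGreedyLevels g p G) (hg0 : ∀ γ, 0 ≤ g γ) (hg : Summable g) :
    HasSum (fun i => (p i - p (i + 1)) * #(G i)) (∑' γ, g γ) := by
  have hterm : ∀ i, 0 ≤ (p i - p (i + 1)) * #(G i) := fun i =>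
    mul_nonneg (sub_nonneg.mpr (h.strictAnti i.lt_succ_self).le) (Nat.cast_nonneg _)
  rw [hasSum_iff_tendsto_nat_of_nonneg hterm, ← tendsto_add_atTop_iff_nat 1]
  simpa only [h.sum_range_succ_eq] using h.tendsto_sum_sub hg0 hg

end IsGreedyLevels

theorem stmt_11_general {X : Type*} [NormedAddCommGroup X] [NormedSpace ℝ X]
    {Γ : Type*} (e : Γ → X)
    (f : X →L[ℝ] ℝ) (hsum : Summable fun γ => |f (e γ)|)
    (p : ℕ → ℝ) (G : ℕ → Finset Γ)
    (hp1 : IsGreatest (Set.range fun γ => |f (e γ)|) (p 1))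
    (hG : ∀ n, 1 ≤ n → (G n : Set Γ) = {γ | p n ≤ |f (e γ)|})
    (hpsucc : ∀ n, 1 ≤ n →
      IsGreatest ((fun γ => |f (e γ)|) '' (↑(G n) : Set Γ)ᶜ) (p (n + 1))) :
    HasSum (fun i : ℕ => (p (i + 1) - p (i + 2)) * ((G (i + 1)).card : ℝ))
      (∑' γ, |f (e γ)|) := by
  have h : IsGreedyLevels (fun γ => |f (e γ)|) (fun n => p (n + 1)) (fun n => G (n + 1)) :=
    ⟨hp1, fun n => hG (n + 1) n.succ_pos, fun n => hpsucc (n + 1) n.succ_pos⟩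
  exact h.hasSum (fun _ => abs_nonneg _) hsum

theorem stmt_11 {X : Type*} [NormedAddCommGroup X] [NormedSpace ℝ X] [CompleteSpace X]
    {Γ : Type*} (e : Γ → X) (es : Γ → X →L[ℝ] ℝ)
    (hbi : ∀ α β : Γ, es α (e β) = if α = β then 1 else 0)
    (hnorm : ∀ γ, ‖e γ‖ = 1)
    (f : X →L[ℝ] ℝ) (hsum : Summable fun γ => |f (e γ)|)
    (hinf : {γ | f (e γ) ≠ 0}.Infinite)
    (p : ℕ → ℝ) (G : ℕ → Finset Γ)
    (hp1 : IsGreatest (Set.range fun γ => |f (e γ)|) (p 1))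
    (hG : ∀ n, 1 ≤ n → (G n : Set Γ) = {γ | p n ≤ |f (e γ)|})
    (hpsucc : ∀ n, 1 ≤ n →
      IsGreatest ((fun γ => |f (e γ)|) '' (↑(G n) : Set Γ)ᶜ) (p (n + 1))) :
    HasSum (fun i : ℕ => (p (i + 1) - p (i + 2)) * ((G (i + 1)).card : ℝ))
      (∑' γ, |f (e γ)|) :=
  stmt_11_general e f hsum p G hp1 hG hpsucc
end

section
/- Let X be a Banach space and B ⊆ B_{X*} a boundary of the norm (for every x ∈ S_X there is f ∈ B with f(x) = 1). If (x_n) is a bounded sequence in X such that f(x_n) → 0 for every f ∈ B, then x_n → 0 weakly. -/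
/-!
Suppose `g (x n) ≥ ε₀` along a subsequence and let `K n` be the closed convex hull of the tail
`{x j | j ≥ n}`. Simons' construction chooses greedily `ω n ∈ K n` almost minimising
`‖∑_{k<n} 2^{-k-1} ω k + 2^{-n} ω n‖` and sets `Φ = ∑ 2^{-k-1} ω k`. The weighted tails
`ψ n = ∑ 2^{-i-1} ω (i + n)` lie in `K n`, and near-minimality forces every norming functional
`b ∈ B` of `Φ` to satisfy `b (ψ n) ≥ ‖Φ‖ - 2ε` for all `n`. As `b (x j) → 0`, `b ≤ ε` on `K N` for
large `N`, so `‖Φ‖ ≤ 3ε`; but `Φ ∈ K 0` gives `g Φ ≥ ε₀`, which is impossible for small `ε`.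
-/

open Filter Topology Set Finset

theorem Convex.hasSum_mem {ι E : Type*} [AddCommGroup E] [Module ℝ E] [TopologicalSpace E]
    [ContinuousSMul ℝ E] {s : Set E} (hs : Convex ℝ s) (hcl : IsClosed s) {w : ι → ℝ}
    {z : ι → E} {T : E} (h₀ : ∀ i, 0 ≤ w i) (h₁ : HasSum w 1) (hz : ∀ i, z i ∈ s)
    (hT : HasSum (fun i => w i • z i) T) : T ∈ s := by
  have hlim : Tendsto (fun t : Finset ι => (∑ i ∈ t, w i)⁻¹ • ∑ i ∈ t, w i • z i)
      atTop (𝓝 T) := by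
    simpa using (h₁.inv₀ one_ne_zero).smul hT
  refine hcl.mem_of_tendsto hlim ?_
  filter_upwards [h₁.eventually_const_lt zero_lt_one] with t ht
  simp only [Finset.smul_sum, smul_smul, inv_mul_eq_div]
  exact hs.sum_mem (fun i _ => div_nonneg (h₀ i) ht.le)
    (by rw [← Finset.sum_div, div_self ht.ne']) (fun i _ => hz i)

theorem exists_forall_le_add_of_bddBelow {α : Type*} {s : Set α} (hs : s.Nonempty) {f : α → ℝ}
    (hf : BddBelow (f '' s)) {η : ℝ} (hη : 0 < η) : ∃ z ∈ s, ∀ u ∈ s, f z ≤ f u + η := by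
  obtain ⟨_, ⟨z, hz, rfl⟩, hlt⟩ :=
    exists_lt_of_csInf_lt (hs.image f) (lt_add_of_pos_right (sInf (f '' s)) hη)
  exact ⟨z, hz, fun u hu => hlt.le.trans (by gcongr; exact csInf_le hf (mem_image_of_mem f hu))⟩

theorem exists_seq_forall_sum_range {α M : Type*} [AddCommMonoid M] (c : ℕ → α → M)
    {P : ℕ → M → α → Prop} (h : ∀ n v, ∃ a, P n v a) :
    ∃ ω : ℕ → α, ∀ n, P n (∑ k ∈ range n, c k (ω k)) (ω n) := by
  choose pick hpick using h
  let S : ℕ → M := fun n => Nat.rec 0 (fun m v => v + c m (pick m v)) n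
  refine ⟨fun n => pick n (S n), fun n => ?_⟩
  have hS : ∀ n, S n = ∑ k ∈ range n, c k (pick k (S k)) := by
    intro n
    induction n with
    | zero => rfl
    | succ m ih => rw [sum_range_succ, ← ih]
  rw [← hS]
  exact hpick n (S n)

theorem hasSum_half_pow_succ : HasSum (fun i : ℕ => (2⁻¹ : ℝ) ^ (i + 1)) 1 := by
  have h := (hasSum_geometric_of_lt_one (r := (2⁻¹ : ℝ)) (by norm_num) (by norm_num)).mul_right 2⁻¹
  rw [show ((1 : ℝ) - 2⁻¹)⁻¹ * 2⁻¹ = 1 by norm_num] at h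
  simpa only [← pow_succ] using h

section HalvingTail

variable {X : Type*} [NormedAddCommGroup X] [NormedSpace ℝ X]

noncomputable def halvingTail (ω : ℕ → X) (n : ℕ) : X := ∑' i, (2⁻¹ : ℝ) ^ (i + 1) • ω (i + n)

variable [CompleteSpace X] {ω : ℕ → X} {C : ℝ}

theorem summable_half_pow_succ_smul (hω : ∀ k, ‖ω k‖ ≤ C) :
    Summable (fun i => (2⁻¹ : ℝ) ^ (i + 1) • ω i) :=
  .of_norm_bounded (hasSum_half_pow_succ.summable.mul_right C) fun i => by
    rw [norm_smul, Real.norm_of_nonneg (by positivity)]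
    exact mul_le_mul_of_nonneg_left (hω i) (by positivity)

theorem hasSum_halvingTail (hω : ∀ k, ‖ω k‖ ≤ C) (n : ℕ) :
    HasSum (fun i => (2⁻¹ : ℝ) ^ (i + 1) • ω (i + n)) (halvingTail ω n) :=
  (summable_half_pow_succ_smul fun k => hω (k + n)).hasSum

theorem halvingTail_eq_half_smul_add (hω : ∀ k, ‖ω k‖ ≤ C) (n : ℕ) :
    halvingTail ω n = (2⁻¹ : ℝ) • ω n + (2⁻¹ : ℝ) • halvingTail ω (n + 1) := by
  rw [halvingTail, (hasSum_halvingTail hω n).summable.tsum_eq_zero_add, halvingTail,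
    ← Summable.tsum_const_smul _ (hasSum_halvingTail hω (n + 1)).summable]
  simp only [smul_smul, ← pow_succ', zero_add, pow_one, add_right_comm _ 1 n, add_assoc]

theorem halvingTail_zero_eq_sum_add (hω : ∀ k, ‖ω k‖ ≤ C) (n : ℕ) :
    halvingTail ω 0 =
      ∑ k ∈ range n, (2⁻¹ : ℝ) ^ (k + 1) • ω k + (2⁻¹ : ℝ) ^ n • halvingTail ω n := by
  induction n with
  | zero => simp
  | succ n ih =>
    rw [ih, halvingTail_eq_half_smul_add hω n, sum_range_succ, smul_add, smul_smul, smul_smul,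
      ← pow_succ, add_assoc]

theorem halvingTail_mem {s : Set X} (hs : Convex ℝ s) (hcl : IsClosed s) (hω : ∀ k, ‖ω k‖ ≤ C)
    {n : ℕ} (hmem : ∀ k, n ≤ k → ω k ∈ s) : halvingTail ω n ∈ s :=
  hs.hasSum_mem hcl (fun _ => by positivity) hasSum_half_pow_succ
    (fun i => hmem _ (Nat.le_add_left n i)) (hasSum_halvingTail hω n)

end HalvingTail

theorem le_add_two_mul_of_forall_le_succ_add {a : ℕ → ℝ} {ε : ℝ} (hε : 0 ≤ ε)
    (h : ∀ n, a n ≤ a (n + 1) + ε * 2⁻¹ ^ n) (n : ℕ) : a 0 ≤ a n + 2 * ε := by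
  suffices a 0 ≤ a n + 2 * ε * (1 - 2⁻¹ ^ n) by
    nlinarith [pow_nonneg (by norm_num : (0 : ℝ) ≤ 2⁻¹) n]
  induction n with
  | zero => simp
  | succ n ih =>
    have : 2 * ε * 2⁻¹ ^ (n + 1) = ε * 2⁻¹ ^ n := by ring
    linarith [h n]

theorem ContinuousLinearMap.apply_le_norm {X : Type*} [SeminormedAddCommGroup X]
    [NormedSpace ℝ X] {b : X →L[ℝ] ℝ} (hb : ‖b‖ ≤ 1) (z : X) : b z ≤ ‖z‖ :=
  (le_abs_self _).trans (by simpa using b.le_of_opNorm_le hb z)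

theorem exists_forall_norm_sub_le_apply_of_antitone {X : Type*} [NormedAddCommGroup X]
    [NormedSpace ℝ X] [CompleteSpace X] {K : ℕ → Set X} (hanti : Antitone K)
    (hconv : ∀ n, Convex ℝ (K n)) (hcl : ∀ n, IsClosed (K n)) (hne : ∀ n, (K n).Nonempty)
    (hbdd : Bornology.IsBounded (K 0)) {ε : ℝ} (hε : 0 < ε) :
    ∃ Φ ∈ K 0, ∃ ψ : ℕ → X, (∀ n, ψ n ∈ K n) ∧
      ∀ b : X →L[ℝ] ℝ, ‖b‖ ≤ 1 → b Φ = ‖Φ‖ → ∀ n, ‖Φ‖ - 2 * ε ≤ b (ψ n) := by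
  obtain ⟨C, hC⟩ := hbdd.exists_norm_le
  -- The tolerance `ε 4^{-n}`, divided by the weight `2^{-n}` of `ω n`, leaves `ε 2^{-n}`,
  -- and these sum to `2ε`.
  obtain ⟨ω, hω⟩ := exists_seq_forall_sum_range (fun k a => (2⁻¹ : ℝ) ^ (k + 1) • a)
    (P := fun n v a => a ∈ K n ∧ ∀ u ∈ K n,
      ‖v + (2⁻¹ : ℝ) ^ n • a‖ ≤ ‖v + (2⁻¹ : ℝ) ^ n • u‖ + 2⁻¹ ^ n * (ε * 2⁻¹ ^ n))
    fun n v => exists_forall_le_add_of_bddBelow (hne n)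
      ⟨0, by rintro _ ⟨u, -, rfl⟩; positivity⟩ (by positivity)
  have hωC : ∀ k, ‖ω k‖ ≤ C := fun k => hC _ (hanti (Nat.zero_le k) (hω k).1)
  have hψK : ∀ n, halvingTail ω n ∈ K n := fun n =>
    halvingTail_mem (hconv n) (hcl n) hωC fun k hk => hanti hk (hω k).1
  refine ⟨halvingTail ω 0, hψK 0, halvingTail ω, hψK, fun b hb hbΦ n => ?_⟩
  suffices hstep : ∀ n, b (halvingTail ω n) ≤ b (halvingTail ω (n + 1)) + ε * 2⁻¹ ^ n by
    linarith [le_add_two_mul_of_forall_le_succ_add hε.le hstep n]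
  intro n
  have ht : (0 : ℝ) < 2⁻¹ ^ n := by positivity
  have hdecomp := halvingTail_zero_eq_sum_add hωC n
  have hmin : b (ω n) ≤ b (halvingTail ω n) + ε * 2⁻¹ ^ n := by
    have hnorm := b.apply_le_norm hb
      (∑ k ∈ range n, (2⁻¹ : ℝ) ^ (k + 1) • ω k + (2⁻¹ : ℝ) ^ n • ω n)
    have hnear := (hω n).2 _ (hψK n)
    rw [← hdecomp, ← hbΦ, hdecomp] at hnear
    simp only [map_add, map_smul, smul_eq_mul] at hnorm hnear
    nlinarith
  have hrec := congrArg b (halvingTail_eq_half_smul_add hωC n)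
  simp only [map_add, map_smul, smul_eq_mul] at hrec
  linarith

section Boundary

variable {X : Type*} [NormedAddCommGroup X] [NormedSpace ℝ X] {B : Set (X →L[ℝ] ℝ)}

theorem exists_mem_apply_eq_norm_of_boundary (hbdry : ∀ x : X, ‖x‖ = 1 → ∃ f ∈ B, f x = 1)
    {x : X} (hx : x ≠ 0) : ∃ f ∈ B, f x = ‖x‖ := by
  obtain ⟨f, hf, h1⟩ := hbdry (‖x‖⁻¹ • x) (norm_smul_inv_norm hx)
  refine ⟨f, hf, ?_⟩
  rw [map_smul, smul_eq_mul, inv_mul_eq_one₀ (norm_ne_zero_iff.2 hx)] at h1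
  exact h1.symm

variable [CompleteSpace X] {y : ℕ → X} {C : ℝ}

theorem exists_apply_lt_of_tendsto_boundary (hB1 : ∀ f ∈ B, ‖f‖ ≤ 1)
    (hbdry : ∀ x : X, ‖x‖ = 1 → ∃ f ∈ B, f x = 1) (hbdd : ∀ n, ‖y n‖ ≤ C)
    (hconv : ∀ f ∈ B, Tendsto (fun n => f (y n)) atTop (𝓝 0))
    (g : X →L[ℝ] ℝ) {ε₀ : ℝ} (hε₀ : 0 < ε₀) :
    ∃ n, g (y n) < ε₀ := by
  by_contra! hg
  let K n := closedConvexHull ℝ (y '' Ici n)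
  have hK_subset : ∀ {n} {s : Set X}, Convex ℝ s → IsClosed s → (∀ j, n ≤ j → y j ∈ s) →
      K n ⊆ s := fun hs hcl hy => closedConvexHull_min (image_subset_iff.2 hy) hs hcl
  have hK_bdd : Bornology.IsBounded (K 0) := Metric.isBounded_closedBall.subset <|
    hK_subset (convex_closedBall 0 C) Metric.isClosed_closedBall fun j _ => by simpa using hbdd j
  set ε := ε₀ / (3 * (‖g‖ + 1))
  have hε : 0 < ε := by positivity
  have hK_anti : Antitone K := fun m n hmn =>
    (closedConvexHull ℝ).monotone (image_mono (Ici_subset_Ici.2 hmn))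
  obtain ⟨Φ, hΦ, ψ, hψ, hΦψ⟩ := exists_forall_norm_sub_le_apply_of_antitone hK_anti
    (fun n => convex_closedConvexHull) (fun n => isClosed_closedConvexHull)
    (fun n => ⟨y n, subset_closedConvexHull ⟨n, self_mem_Ici, rfl⟩⟩) hK_bdd hε
  have hgΦ : ε₀ ≤ g Φ := hK_subset (convex_halfSpace_ge g.isLinear ε₀)
    (isClosed_le continuous_const g.continuous) (fun j _ => hg j) hΦ
  obtain ⟨b, hbB, hbΦ⟩ := exists_mem_apply_eq_norm_of_boundary hbdry (x := Φ) fun h => by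
    rw [h, map_zero] at hgΦ
    linarith
  obtain ⟨N, hN⟩ := eventually_atTop.1 ((hconv b hbB).eventually_lt_const hε)
  have hbψ : b (ψ N) ≤ ε := hK_subset (convex_halfSpace_le b.isLinear ε)
    (isClosed_le b.continuous continuous_const) (fun j hj => (hN j hj).le) (hψ N)
  have hΦ_le : ‖Φ‖ ≤ 3 * ε := by linarith [hΦψ b (hB1 b hbB) hbΦ N]
  have hε_eq : 3 * ε * (‖g‖ + 1) = ε₀ := by simp only [ε]; field_simp
  have hgΦ_le : g Φ ≤ ‖g‖ * (3 * ε) :=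
    (le_abs_self _).trans ((g.le_opNorm Φ).trans (by gcongr))
  linarith

theorem eventually_apply_lt_of_tendsto_boundary (hB1 : ∀ f ∈ B, ‖f‖ ≤ 1)
    (hbdry : ∀ x : X, ‖x‖ = 1 → ∃ f ∈ B, f x = 1) (hbdd : ∀ n, ‖y n‖ ≤ C)
    (hconv : ∀ f ∈ B, Tendsto (fun n => f (y n)) atTop (𝓝 0))
    (g : X →L[ℝ] ℝ) {ε₀ : ℝ} (hε₀ : 0 < ε₀) :
    ∀ᶠ n in atTop, g (y n) < ε₀ := by
  by_contra h
  obtain ⟨φ, hφ, hle⟩ := extraction_of_frequently_atTop (not_eventually.1 h)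
  obtain ⟨n, hn⟩ := exists_apply_lt_of_tendsto_boundary hB1 hbdry (y := y ∘ φ)
    (fun n => hbdd (φ n)) (fun f hf => (hconv f hf).comp hφ.tendsto_atTop) g hε₀
  exact hle n hn

end Boundary

theorem stmt_15 {X : Type*} [NormedAddCommGroup X] [NormedSpace ℝ X] [CompleteSpace X]
    (B : Set (X →L[ℝ] ℝ)) (hB1 : ∀ f ∈ B, ‖f‖ ≤ 1)
    (hbdry : ∀ x : X, ‖x‖ = 1 → ∃ f ∈ B, f x = 1)
    (x : ℕ → X) (C : ℝ) (hbdd : ∀ n, ‖x n‖ ≤ C)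
    (hconv : ∀ f ∈ B, Filter.Tendsto (fun n => f (x n)) Filter.atTop (nhds 0)) :
    ∀ g : X →L[ℝ] ℝ, Filter.Tendsto (fun n => g (x n)) Filter.atTop (nhds 0) := by
  intro g
  refine tendsto_order.2 ⟨fun a ha => ?_, fun a ha =>
    eventually_apply_lt_of_tendsto_boundary hB1 hbdry hbdd hconv g ha⟩
  filter_upwards [eventually_apply_lt_of_tendsto_boundary hB1 hbdry hbdd hconv (-g)
    (neg_pos.2 ha)] with n hn
  simpa using hn
end

section
/- Let X be a real normed space and f ∈ X* a norm-one functional. Suppose x lies in the interior of A_f ∩ B_X relative to the affine hyperplane A_f = {y : f(y) = 1}. Then there exists r > 0 such that ‖x + z‖ = f(x + z) for all z ∈ X with ‖z‖ < r. -/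
theorem stmt_17 {X : Type*} [NormedAddCommGroup X] [NormedSpace ℝ X]
    (f : X →L[ℝ] ℝ) (hf : ‖f‖ = 1) (x : X) (hx : f x = 1)
    (δ : ℝ) (hδ : 0 < δ)
    (hint : ∀ y : X, f y = 1 → ‖y - x‖ < δ → ‖y‖ ≤ 1) :
    ∃ r > 0, ∀ z : X, ‖z‖ < r → ‖x + z‖ = f (x + z) := by
  have hxnorm : ‖x‖ ≤ 1 := hint x hx (by simpa using hδ)
  refine ⟨min (δ / 8) (1/2), by positivity, fun z hz => ?_⟩
  have hfz : |f z| ≤ ‖z‖ := by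
    calc |f z| ≤ ‖f‖ * ‖z‖ := f.le_opNorm z
    _ = ‖z‖ := by rw [hf, one_mul]
  have hz2 : ‖z‖ < 1/2 := lt_of_lt_of_le hz (min_le_right _ _)
  have hzδ : ‖z‖ < δ / 8 := lt_of_lt_of_le hz (min_le_left _ _)
  set t : ℝ := f (x + z) with ht
  have htval : t = 1 + f z := by simp [ht, hx]
  have ht2 : (1:ℝ)/2 < t := by
    have := abs_lt.mp (lt_of_le_of_lt hfz hz2)
    rw [htval]; linarith [this.1]
  have htpos : 0 < t := by linarith
  set y : X := t⁻¹ • (x + z) with hy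
  have hfy : f y = 1 := by
    rw [hy, map_smul, smul_eq_mul, ← ht, inv_mul_cancel₀ (ne_of_gt htpos)]
  have hdiff : y - x = t⁻¹ • (z - (f z) • x) := by
    have h1 : x + z - t • x = z - (f z) • x := by
      rw [htval, add_smul, one_smul]; abel
    rw [hy, ← h1, smul_sub, smul_smul, inv_mul_cancel₀ (ne_of_gt htpos), one_smul]
  have hynorm : ‖y - x‖ < δ := by
    rw [hdiff, norm_smul]
    have h1 : ‖z - (f z) • x‖ ≤ ‖z‖ + ‖z‖ := by
      calc ‖z - (f z) • x‖ ≤ ‖z‖ + ‖(f z) • x‖ := norm_sub_le _ _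
      _ ≤ ‖z‖ + |f z| * ‖x‖ := by rw [norm_smul]; rfl
      _ ≤ ‖z‖ + ‖z‖ * 1 := by gcongr
      _ = ‖z‖ + ‖z‖ := by ring
    have h2 : ‖t⁻¹‖ ≤ 2 := by
      rw [Real.norm_eq_abs, abs_of_pos (inv_pos.mpr htpos)]
      rw [inv_le_comm₀ htpos (by norm_num)]
      linarith
    calc ‖t⁻¹‖ * ‖z - (f z) • x‖ ≤ 2 * (‖z‖ + ‖z‖) := by
          apply mul_le_mul h2 h1 (norm_nonneg _) (by norm_num)
    _ < δ := by linarith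
  have hy1 : ‖y‖ ≤ 1 := hint y hfy hynorm
  have hxz : ‖x + z‖ ≤ t := by
    have : ‖x + z‖ = t * ‖y‖ := by
      rw [hy, norm_smul, Real.norm_eq_abs, abs_of_pos (inv_pos.mpr htpos)]
      field_simp
    rw [this]
    nlinarith
  have hge : t ≤ ‖x + z‖ := by
    calc t ≤ |t| := le_abs_self _
    _ ≤ ‖f‖ * ‖x + z‖ := f.le_opNorm _
    _ = ‖x + z‖ := by rw [hf, one_mul]
  linarith
end

section
/- Let D be a subset of the dual unit ball of a real normed space X such that every f ∈ D locally supports the norm at some point x_f with a uniform radius r ≥ 2^{-m} (i.e. f(x_f + z) = ‖x_f + z‖ for all ‖z‖ < 2^{-m}), where each x_f has ‖x_f‖ = 1. If f, f_k ∈ D with ‖f − f_k‖ → 0 and the points x_{f_k} converge in norm to some y, then all but finitely many f_k are equal; in particular the family {x_f : f ∈ D} is 2^{-m}-separated in norm. -/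
lemma stmt_18_key {X : Type*} [NormedAddCommGroup X] [NormedSpace ℝ X]
    (m : ℕ) (D : Set (X →L[ℝ] ℝ))
    (xf : (X →L[ℝ] ℝ) → X)
    (hxf : ∀ f ∈ D, ‖xf f‖ = 1 ∧
      ∀ z : X, ‖z‖ < (2 : ℝ) ^ (-(m : ℤ)) → f (xf f + z) = ‖xf f + z‖)
    {f g : X →L[ℝ] ℝ} (hf : f ∈ D) (hg : g ∈ D)
    (h : ‖xf f - xf g‖ < (2 : ℝ) ^ (-(m : ℤ))) : f = g := by
  set r : ℝ := (2 : ℝ) ^ (-(m : ℤ)) with hr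
  obtain ⟨_, hfs⟩ := hxf f hf
  obtain ⟨_, hgs⟩ := hxf g hg
  have hδ : (0 : ℝ) < r - ‖xf f - xf g‖ := by linarith
  have agree : ∀ u : X, ‖u‖ < r - ‖xf f - xf g‖ → f (xf g + u) = g (xf g + u) := by
    intro u hu
    have hnn : (0:ℝ) ≤ ‖xf f - xf g‖ := norm_nonneg _
    have h1 : f (xf f + (xf g - xf f + u)) = ‖xf f + (xf g - xf f + u)‖ := by
      apply hfs
      calc ‖xf g - xf f + u‖ ≤ ‖xf g - xf f‖ + ‖u‖ := norm_add_le _ _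
        _ < r := by rw [norm_sub_rev]; linarith
    have h2 : g (xf g + u) = ‖xf g + u‖ := hgs u (by linarith)
    have e : xf f + (xf g - xf f + u) = xf g + u := by abel
    rw [e] at h1
    rw [h1, h2]
  have h0 : f (xf g) = g (xf g) := by
    simpa using agree 0 (by simpa using hδ)
  have small : ∀ u : X, ‖u‖ < r - ‖xf f - xf g‖ → f u = g u := by
    intro u hu
    have := agree u hu
    rw [map_add, map_add, h0] at this
    linarith
  ext x
  set δ := r - ‖xf f - xf g‖
  set t : ℝ := (δ / 2) / (‖x‖ + 1) with ht
  have hx1 : (0:ℝ) < ‖x‖ + 1 := by positivity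
  have htpos : 0 < t := by positivity
  have hts : ‖t • x‖ < δ := by
    rw [norm_smul, Real.norm_eq_abs, abs_of_pos htpos, ht]
    rw [div_mul_eq_mul_div, div_lt_iff₀ hx1]
    nlinarith [norm_nonneg x]
  have := small (t • x) hts
  rw [map_smul, map_smul] at this
  have := mul_left_cancel₀ (ne_of_gt htpos) this
  simpa using this

theorem stmt_18 {X : Type*} [NormedAddCommGroup X] [NormedSpace ℝ X]
    (m : ℕ) (D : Set (X →L[ℝ] ℝ)) (hD1 : ∀ f ∈ D, ‖f‖ ≤ 1)
    (xf : (X →L[ℝ] ℝ) → X)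
    (hxf : ∀ f ∈ D, ‖xf f‖ = 1 ∧
      ∀ z : X, ‖z‖ < (2 : ℝ) ^ (-(m : ℤ)) → f (xf f + z) = ‖xf f + z‖) :
    (∀ f ∈ D, ∀ g ∈ D, f ≠ g → (2 : ℝ) ^ (-(m : ℤ)) ≤ ‖xf f - xf g‖) ∧
    ∀ (f : X →L[ℝ] ℝ) (fk : ℕ → X →L[ℝ] ℝ), f ∈ D → (∀ k, fk k ∈ D) →
      Filter.Tendsto (fun k => ‖f - fk k‖) Filter.atTop (nhds 0) →
      ∀ y : X, Filter.Tendsto (fun k => ‖xf (fk k) - y‖) Filter.atTop (nhds 0) →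
      ∃ N : ℕ, ∀ j ≥ N, ∀ k ≥ N, fk j = fk k := by
  set r : ℝ := (2 : ℝ) ^ (-(m : ℤ)) with hr
  have hrpos : 0 < r := by positivity
  have sep : ∀ f ∈ D, ∀ g ∈ D, f ≠ g → r ≤ ‖xf f - xf g‖ := by
    intro f hf g hg hne
    by_contra hlt
    push_neg at hlt
    exact hne (stmt_18_key m D xf hxf hf hg hlt)
  refine ⟨sep, ?_⟩
  intro f fk _ hfk _ y hy
  have hev : ∀ᶠ k in Filter.atTop, ‖xf (fk k) - y‖ < r / 2 := by
    have : Set.Iio (r / 2) ∈ nhds (0 : ℝ) := Iio_mem_nhds (by linarith)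
    exact hy this
  obtain ⟨N, hN⟩ := Filter.eventually_atTop.mp hev
  refine ⟨N, fun j hj k hk => ?_⟩
  by_contra hne
  have hsep := sep (fk j) (hfk j) (fk k) (hfk k) hne
  have : ‖xf (fk j) - xf (fk k)‖ ≤ ‖xf (fk j) - y‖ + ‖y - xf (fk k)‖ := by
    have := norm_add_le (xf (fk j) - y) (y - xf (fk k))
    simpa using this
  have h1 := hN j hj
  have h2 := hN k hk
  rw [norm_sub_rev] at h2
  linarith
end
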